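/- Let X be a complex Banach space, U a bounded invertible operator on X, A a bounded invertible operator on X, and γ ∈ ℂ with |γ| = 1 which is not a root of unity, such that U A U⁻¹ = γ A. Let w be a bounded operator on X commuting with A and set T = w U. Then the Weyl spectrum σ₄(T) is a rotation invariant subset of ℂ: if λ ∈ σ₄(T) and μ ∈ ℂ with |μ| = 1, then μλ ∈ σ₄(T). -/

import Mathlib

/-!
Conjugation by `A⁻¹` turns `T = wU` into `γT`, because `w` commutes with `A` and `UAU⁻¹ = γA`;
as Weyl operators are stable under multiplication by invertible operators, `σ₄(T)` is invariant
under `z ↦ γz`. It is also closed: a Weyl operator becomes invertible after adding a finite-rank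
operator, and invertible plus finite rank is Weyl, so the Weyl operators form an open set. Since
`γ` is not a root of unity, its powers are dense in the unit circle, and a closed set invariant
under multiplication by `γ` is invariant under every rotation.
-/

open Filter Topology

/-- A bounded operator is Weyl if it is Fredholm (closed range, finite dimensional kernel,
finite codimensional range) of index zero, i.e. `dim ker = codim ran`. -/
def IsWeylOp {X : Type*} [NormedAddCommGroup X] [NormedSpace ℂ X]
    (S : X →L[ℂ] X) : Prop :=
  IsClosed (LinearMap.range (S : X →ₗ[ℂ] X) : Set X) ∧
    FiniteDimensional ℂ (LinearMap.ker (S : X →ₗ[ℂ] X)) ∧ FiniteDimensional ℂ (X ⧸ LinearMap.range (S : X →ₗ[ℂ] X)) ∧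
    Module.finrank ℂ (LinearMap.ker (S : X →ₗ[ℂ] X)) = Module.finrank ℂ (X ⧸ LinearMap.range (S : X →ₗ[ℂ] X))

/-- The Weyl spectrum `σ₄(T)`. -/
def sigma4 {X : Type*} [NormedAddCommGroup X] [NormedSpace ℂ X]
    (T : X →L[ℂ] X) : Set ℂ :=
  {l : ℂ | ¬ IsWeylOp (l • (1 : X →L[ℂ] X) - T)}

open LinearMap (ker range)
open Module

namespace LinearMap

variable {K M : Type*} [Field K] [AddCommGroup M] [Module K M] (g : M →ₗ[K] M)

theorem ker_one_add_le_range : ker (1 + g) ≤ range g := fun x hx =>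
  ⟨-x, by simpa using neg_eq_of_add_eq_zero_left hx⟩

theorem range_one_add_sup_range : range (1 + g) ⊔ range g = ⊤ :=
  eq_top_iff.mpr fun x _ => Submodule.mem_sup.mpr
    ⟨(1 + g) x, mem_range_self _ x, -g x, (range g).neg_mem (mem_range_self g x), by simp⟩

theorem mapsTo_one_add_range : ∀ x ∈ range g, (1 + g) x ∈ range g := fun x hx =>
  (range g).add_mem hx (mem_range_self g x)

theorem surjective_mkQ_range_one_add_comp_subtype :
    Function.Surjective ((range (1 + g)).mkQ ∘ₗ (range g).subtype) := by
  intro y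
  obtain ⟨x, rfl⟩ := (range (1 + g)).mkQ_surjective y
  obtain ⟨r, hr, v, hv, rfl⟩ :=
    Submodule.mem_sup.mp (range_one_add_sup_range g ▸ Submodule.mem_top (x := x))
  exact ⟨⟨v, hv⟩, (Submodule.Quotient.eq _).mpr (by simpa using (range (1 + g)).neg_mem hr)⟩

variable [FiniteDimensional K (range g)]

theorem finiteDimensional_quotient_range_one_add : FiniteDimensional K (M ⧸ range (1 + g)) :=
  Module.Finite.of_surjective _ (surjective_mkQ_range_one_add_comp_subtype g)

-- Rank–nullity for `φ : range g → M ⧸ range (1 + g)` and for `1 + g` restricted to `range g`,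
-- whose kernel is all of `ker (1 + g)` and whose range is `ker φ`.
theorem finrank_ker_one_add : finrank K (ker (1 + g)) = finrank K (M ⧸ range (1 + g)) := by
  set V := range g
  set f := 1 + g
  set φ : V →ₗ[K] M ⧸ range f := (range f).mkQ ∘ₗ V.subtype
  let fV : V →ₗ[K] V := f.restrict (mapsTo_one_add_range g)
  have hker_φ : ker φ = range fV := by
    rw [ker_comp, Submodule.ker_mkQ]
    ext ⟨v, hv⟩
    refine ⟨fun ⟨x, hx⟩ => ⟨⟨x, ?_⟩, Subtype.ext hx⟩,
      fun ⟨w, hw⟩ => ⟨w, congrArg Subtype.val hw⟩⟩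
    have : x = f x - g x := by simp [f]
    exact this ▸ hx ▸ V.sub_mem hv (mem_range_self g x)
  have hker_fV : finrank K (ker fV) = finrank K (ker f) :=
    ((LinearEquiv.ofEq _ _ (ker_restrict _)).trans
      (Submodule.comapSubtypeEquivOfLe (ker_one_add_le_range g))).finrank_eq
  have h1 := finrank_range_add_finrank_ker φ
  have h2 := finrank_range_add_finrank_ker fV
  rw [range_eq_top.mpr (surjective_mkQ_range_one_add_comp_subtype g), finrank_top, hker_φ] at h1
  omega

end LinearMap

theorem Circle.denseRange_zpow {g : Circle} (hg : orderOf g = 0) :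
    DenseRange (g ^ · : ℤ → Circle) := by
  let e := AddCircle.homeomorphCircle (T := 1) one_ne_zero
  have he (a : AddCircle (1 : ℝ)) (n : ℤ) : e (n • a) = e a ^ n := by
    simp only [e, AddCircle.homeomorphCircle_apply, AddCircle.toCircle_zsmul]
  have ha : addOrderOf (e.symm g) = 0 := by
    rw [addOrderOf_eq_zero_iff']
    intro n hn h
    rw [orderOf_eq_zero_iff'] at hg
    have h1 : e 0 = 1 := by simp [e, AddCircle.homeomorphCircle_apply]
    exact hg n hn (by simpa [h, h1] using (he (e.symm g) n).symm)
  convert e.surjective.denseRange.comp (AddCircle.denseRange_zsmul_iff.mpr ha) e.continuous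
    using 2 with n
  simp [he]

theorem IsClosed.circle_mul_mem {s : Set ℂ} (hs : IsClosed s) {g : Circle} (hg : orderOf g = 0)
    (hgs : ∀ z, (g : ℂ) * z ∈ s ↔ z ∈ s) {z : ℂ} (hz : z ∈ s) (μ : Circle) : (μ : ℂ) * z ∈ s := by
  refine (Circle.denseRange_zpow hg).induction_on (p := fun μ : Circle => (μ : ℂ) * z ∈ s) μ
    (hs.preimage (by fun_prop)) fun n => ?_
  induction n using Int.induction_on with
  | zero => simpa using hz
  | succ n ih =>
    rw [zpow_add_one, Circle.coe_mul, mul_comm _ (g : ℂ), mul_assoc]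
    exact (hgs _).mpr ih
  | pred n ih =>
    have hpow : g * g ^ (-(n : ℤ) - 1) = g ^ (-(n : ℤ)) := by group
    refine (hgs _).mp ?_
    rwa [← mul_assoc, ← Circle.coe_mul, hpow]

section Weyl

variable {X : Type*} [NormedAddCommGroup X] [NormedSpace ℂ X]

open LinearMap.FiniteRangeSetoid in
theorem isWeylOp_one_add {G : X →L[ℂ] X} (hG : (G : X →ₗ[ℂ] X).HasFiniteRange) :
    IsWeylOp (1 + G) := by
  have : FiniteDimensional ℂ (range (G : X →ₗ[ℂ] X)) := Module.Finite.iff_fg.mpr hG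
  have hequiv : ((1 : X →L[ℂ] X) : X →ₗ[ℂ] X) ≈ ((1 + G : X →L[ℂ] X) : X →ₗ[ℂ] X) :=
    equiv_iff_hasFiniteRange.mpr (by simpa using hG.neg)
  have hcl :=
    (ContinuousLinearMap.isStrictMap_isClosed_range_iff_of_finiteRangeSetoid _ _ hequiv).mp
      ⟨Topology.IsStrictMap.id, by simp [Module.End.one_eq_id]⟩
  rw [IsWeylOp, ContinuousLinearMap.toLinearMap_add, ContinuousLinearMap.toLinearMap_one]
  exact ⟨hcl.2, Submodule.finiteDimensional_of_le (LinearMap.ker_one_add_le_range _),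
    LinearMap.finiteDimensional_quotient_range_one_add _, LinearMap.finrank_ker_one_add _⟩

theorem isWeylOp_congr {S S' : X →L[ℂ] X}
    (hcl : IsClosed (range (S : X →ₗ[ℂ] X) : Set X) ↔
      IsClosed (range (S' : X →ₗ[ℂ] X) : Set X))
    (k : ker (S : X →ₗ[ℂ] X) ≃ₗ[ℂ] ker (S' : X →ₗ[ℂ] X))
    (q : (X ⧸ range (S : X →ₗ[ℂ] X)) ≃ₗ[ℂ] X ⧸ range (S' : X →ₗ[ℂ] X)) :
    IsWeylOp S ↔ IsWeylOp S' :=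
  and_congr hcl <| and_congr (Module.Finite.equiv_iff k) <|
    and_congr (Module.Finite.equiv_iff q) (by rw [k.finrank_eq, q.finrank_eq])

theorem IsUnit.isWeylOp_mul_left_iff {R : X →L[ℂ] X} (hR : IsUnit R) (S : X →L[ℂ] X) :
    IsWeylOp (R * S) ↔ IsWeylOp S := by
  let e := ContinuousLinearEquiv.ofUnit hR.unit
  have hrange : range ((R * S : X →L[ℂ] X) : X →ₗ[ℂ] X) =
      (range (S : X →ₗ[ℂ] X)).map (e : X →ₗ[ℂ] X) :=
    LinearMap.range_comp _ _
  have hker : ker ((R * S : X →L[ℂ] X) : X →ₗ[ℂ] X) = ker (S : X →ₗ[ℂ] X) :=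
    LinearMap.ker_comp_of_ker_eq_bot _ e.toLinearEquiv.ker
  refine isWeylOp_congr ?_ (.ofEq _ _ hker)
    (Submodule.Quotient.equiv _ _ e.toLinearEquiv hrange.symm).symm
  rw [hrange, Submodule.map_coe]
  exact e.toHomeomorph.isClosed_image

theorem IsUnit.isWeylOp_mul_right_iff {R : X →L[ℂ] X} (hR : IsUnit R) (S : X →L[ℂ] X) :
    IsWeylOp (S * R) ↔ IsWeylOp S := by
  let e := ContinuousLinearEquiv.ofUnit hR.unit
  have hrange : range ((S * R : X →L[ℂ] X) : X →ₗ[ℂ] X) = range (S : X →ₗ[ℂ] X) :=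
    LinearMap.range_comp_of_range_eq_top _ e.toLinearEquiv.range
  have hker : ker ((S * R : X →L[ℂ] X) : X →ₗ[ℂ] X) =
      (ker (S : X →ₗ[ℂ] X)).map (e.symm : X →ₗ[ℂ] X) :=
    (LinearMap.ker_comp _ _).trans (Submodule.comap_equiv_eq_map_symm e.toLinearEquiv _)
  exact isWeylOp_congr (by rw [hrange])
    ((LinearEquiv.ofEq _ _ hker).trans (e.symm.toLinearEquiv.submoduleMap _).symm)
    (Submodule.quotEquivOfEq _ _ hrange)

theorem IsUnit.isWeylOp_add {R F : X →L[ℂ] X} (hR : IsUnit R)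
    (hF : (F : X →ₗ[ℂ] X).HasFiniteRange) : IsWeylOp (R + F) := by
  obtain ⟨u, rfl⟩ := hR
  have hfactor : ↑u + F = ↑u * (1 + ↑u⁻¹ * F) := by
    rw [mul_add, mul_one, ← mul_assoc, Units.mul_inv, one_mul]
  rw [hfactor, u.isUnit.isWeylOp_mul_left_iff]
  exact isWeylOp_one_add (hF.comp_left _)

theorem sigma4_units_conj (u : (X →L[ℂ] X)ˣ) (T : X →L[ℂ] X) :
    sigma4 ((u : X →L[ℂ] X) * T * (↑u⁻¹ : X →L[ℂ] X)) = sigma4 T := by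
  ext l
  have : l • (1 : X →L[ℂ] X) - ↑u * T * ↑u⁻¹ = ↑u * (l • 1 - T) * ↑u⁻¹ := by
    rw [mul_sub, sub_mul, mul_smul_comm, smul_mul_assoc, mul_one, Units.mul_inv]
  change ¬IsWeylOp _ ↔ ¬IsWeylOp _
  rw [this, u⁻¹.isUnit.isWeylOp_mul_right_iff, u.isUnit.isWeylOp_mul_left_iff]

theorem mul_mem_sigma4_smul_iff {c : ℂ} (hc : c ≠ 0) (T : X →L[ℂ] X) (l : ℂ) :
    c * l ∈ sigma4 (c • T) ↔ l ∈ sigma4 T := by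
  have hunit : IsUnit (algebraMap ℂ (X →L[ℂ] X) c) := (isUnit_iff_ne_zero.mpr hc).map _
  have : (c * l) • (1 : X →L[ℂ] X) - c • T = algebraMap ℂ (X →L[ℂ] X) c * (l • 1 - T) := by
    rw [Algebra.algebraMap_eq_smul_one, smul_mul_assoc, one_mul, smul_sub, smul_smul]
  change ¬IsWeylOp _ ↔ ¬IsWeylOp _
  rw [this, hunit.isWeylOp_mul_left_iff]

variable [CompleteSpace X]

theorem IsWeylOp.exists_hasFiniteRange_isUnit_add {S : X →L[ℂ] X} (hS : IsWeylOp S) :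
    ∃ F : X →L[ℂ] X, (F : X →ₗ[ℂ] X).HasFiniteRange ∧ IsUnit (S + F) := by
  obtain ⟨-, hker, hcoker, hindex⟩ := hS
  obtain ⟨P, hP⟩ := Submodule.ClosedComplemented.of_finiteDimensional (ker (S : X →ₗ[ℂ] X))
  obtain ⟨N, hN⟩ := Submodule.exists_isCompl (range (S : X →ₗ[ℂ] X))
  let q := Submodule.quotientEquivOfIsCompl _ N hN
  have : FiniteDimensional ℂ N := q.finiteDimensional
  obtain ⟨J⟩ := FiniteDimensional.nonempty_linearEquiv_of_finrank_eq (hindex.trans q.finrank_eq)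
  -- Index zero lets `J` identify `ker S` with a complement `N` of `range S`, so adding `J ∘ P`
  -- kills the kernel and fills up the cokernel at the same time.
  let G : ker (S : X →ₗ[ℂ] X) →L[ℂ] X :=
    N.subtypeL ∘L LinearMap.toContinuousLinearMap (J : _ →ₗ[ℂ] N)
  have hGP (x : X) : (G ∘L P) x = J (P x) := rfl
  refine ⟨G ∘L P, ?_, ?_⟩
  · rw [ContinuousLinearMap.toLinearMap_comp]
    exact LinearMap.HasFiniteRange.of_finite_dom.comp_right _
  rw [ContinuousLinearMap.isUnit_iff_bijective]
  constructor
  · rw [injective_iff_map_eq_zero]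
    intro x hx
    have hSx : S x = -(J (P x) : X) := eq_neg_of_add_eq_zero_left hx
    have hSx0 : S x = 0 := Submodule.disjoint_def.mp hN.disjoint _
      (LinearMap.mem_range_self _ x) (hSx ▸ N.neg_mem (J (P x)).2)
    have hPx : P x = 0 := by simpa [hSx0, eq_comm (a := (0 : X))] using hSx
    exact congrArg Subtype.val ((hP ⟨x, hSx0⟩).symm.trans hPx)
  · intro y
    obtain ⟨_, ⟨a, rfl⟩, n, hn, rfl⟩ :=
      Submodule.mem_sup.mp (hN.codisjoint.eq_top ▸ Submodule.mem_top (x := y))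
    refine ⟨a - P a + J.symm ⟨n, hn⟩, ?_⟩
    have hPa : S (P a) = 0 := (P a).2
    have hJ : S (J.symm ⟨n, hn⟩) = 0 := (J.symm ⟨n, hn⟩).2
    simp [hGP, hPa, hJ, hP]

theorem isOpen_setOf_isWeylOp : IsOpen {S : X →L[ℂ] X | IsWeylOp S} := by
  refine isOpen_iff_mem_nhds.mpr fun S hS => ?_
  obtain ⟨F, hF, hunit⟩ := hS.exists_hasFiniteRange_isUnit_add
  have hnhds : {S' : X →L[ℂ] X | IsUnit (S' + F)} ∈ 𝓝 S :=
    (Units.isOpen.preimage (continuous_add_const F)).mem_nhds hunit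
  refine Filter.mem_of_superset hnhds fun S' hS' => ?_
  simpa using hS'.isWeylOp_add (F := -F) (by simpa using hF.neg)

theorem isClosed_sigma4 (T : X →L[ℂ] X) : IsClosed (sigma4 T) :=
  (isOpen_setOf_isWeylOp.preimage
    (by fun_prop : Continuous fun l : ℂ => l • (1 : X →L[ℂ] X) - T)).isClosed_compl

end Weyl

theorem statement_4_general {X : Type*} [NormedAddCommGroup X] [NormedSpace ℂ X] [CompleteSpace X]
    (U V A B w T : X →L[ℂ] X) (γ : ℂ)
    (hVU : V * U = 1) (hγ : ‖γ‖ = 1)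
    (hroot : ∀ n : ℕ, 1 ≤ n → γ ^ n ≠ 1)
    (hAB : A * B = 1) (hBA : B * A = 1)
    (hA : U * A * V = γ • A)
    (hwA : w * A = A * w)
    (hT : T = w * U) :
    ∀ l ∈ sigma4 T, ∀ μ : ℂ, ‖μ‖ = 1 → μ * l ∈ sigma4 T := by
  intro l hl μ hμ
  have hγ0 : γ ≠ 0 := norm_ne_zero_iff.mp (hγ ▸ one_ne_zero)
  let u : (X →L[ℂ] X)ˣ := ⟨B, A, hBA, hAB⟩
  have hUA : U * A = γ • (A * U) := by
    rw [← smul_mul_assoc, ← hA, mul_assoc _ V U, hVU, mul_one]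
  have hconj : (u : X →L[ℂ] X) * T * (↑u⁻¹ : X →L[ℂ] X) = γ • T := by
    show B * T * A = γ • T
    rw [hT, mul_assoc B, mul_assoc w, hUA, mul_smul_comm, mul_smul_comm, ← mul_assoc w, hwA,
      mul_assoc A, ← mul_assoc B, hBA, one_mul]
  have hrot (z : ℂ) : γ * z ∈ sigma4 T ↔ z ∈ sigma4 T := by
    rw [← mul_mem_sigma4_smul_iff hγ0 T z, ← hconj, sigma4_units_conj]
  have hord : orderOf (⟨γ, mem_sphere_zero_iff_norm.mpr hγ⟩ : Circle) = 0 :=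
    orderOf_eq_zero_iff'.mpr fun n hn h => hroot n hn (by simpa using congrArg Subtype.val h)
  exact (isClosed_sigma4 T).circle_mul_mem hord hrot hl ⟨μ, mem_sphere_zero_iff_norm.mpr hμ⟩

theorem statement_4 {X : Type*} [NormedAddCommGroup X] [NormedSpace ℂ X] [CompleteSpace X]
    (U V A B w T : X →L[ℂ] X) (γ : ℂ)
    (hUV : U * V = 1) (hVU : V * U = 1) (hγ : ‖γ‖ = 1)
    (hroot : ∀ n : ℕ, 1 ≤ n → γ ^ n ≠ 1)
    (hAB : A * B = 1) (hBA : B * A = 1)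
    (hA : U * A * V = γ • A)
    (hwA : w * A = A * w)
    (hT : T = w * U) :
    ∀ l ∈ sigma4 T, ∀ μ : ℂ, ‖μ‖ = 1 → μ * l ∈ sigma4 T :=
  statement_4_general U V A B w T γ hVU hγ hroot hAB hBA hA hwA hT
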